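/- Let A ∈ M_n. Then for each j = 1,…,n, the j-th largest eigenvalue of Re A is at most the j-th largest singular value of A: λ_j(Re A) ≤ σ_j(A). -/

import Mathlib

/-! Choose a unit vector `x` lying both in the span of the eigenvectors of `Re A` for its `j` largest
eigenvalues and in the span of the eigenvectors of `|A|` for its `n - j + 1` smallest eigenvalues;
the two spaces meet because their dimensions add up to `n + 1`. Then
`λⱼ(Re A) ≤ Re ⟪x, A x⟫ ≤ ‖A x‖ = ‖|A| x‖ ≤ σⱼ(A)`, where `‖A x‖ = ‖|A| x‖` since `|A|² = AᴴA`. -/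

open Matrix Set ComplexOrder

variable {m : Type*}

/-- The modulus `|X| = (XᴴX)^{1/2}` of a matrix. -/
noncomputable def matAbs [Fintype m] [DecidableEq m] (X : Matrix m m ℂ) : Matrix m m ℂ :=
  (Matrix.posSemidef_conjTranspose_mul_self X).1.eigenvectorUnitary.1 *
    diagonal ((↑) ∘ Real.sqrt ∘ (Matrix.posSemidef_conjTranspose_mul_self X).1.eigenvalues) *
    (star (Matrix.posSemidef_conjTranspose_mul_self X).1.eigenvectorUnitary : Matrix m m ℂ)

theorem matAbs_posSemidef [Fintype m] [DecidableEq m] (X : Matrix m m ℂ) :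
    (matAbs X).PosSemidef := by
  unfold matAbs
  have := (Matrix.PosSemidef.diagonal (n := m) (d := ((↑) ∘ Real.sqrt ∘ (Matrix.posSemidef_conjTranspose_mul_self X).1.eigenvalues : m → ℂ)) ?_).mul_mul_conjTranspose_same ((Matrix.posSemidef_conjTranspose_mul_self X).1.eigenvectorUnitary.1)
  · simpa [Matrix.star_eq_conjTranspose] using this
  · intro i; simp [Complex.zero_le_real, Real.sqrt_nonneg]

/-- Functional calculus: apply `f : ℝ → ℝ` to a Hermitian matrix via its spectral
decomposition (junk value `0` for non-Hermitian input). -/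
noncomputable def matFun [Fintype m] [DecidableEq m] (f : ℝ → ℝ) (X : Matrix m m ℂ) :
    Matrix m m ℂ :=
  if h : X.IsHermitian then
    (h.eigenvectorUnitary : Matrix m m ℂ) *
      Matrix.diagonal (fun i => (f (h.eigenvalues i) : ℂ)) *
      star (h.eigenvectorUnitary : Matrix m m ℂ)
  else 0

/-- Real part `Re A = (A + Aᴴ)/2`. -/
noncomputable def reM (A : Matrix m m ℂ) : Matrix m m ℂ := (1/2 : ℂ) • (A + Aᴴ)

/-- Imaginary part `Im A = (A - Aᴴ)/(2i)`. -/
noncomputable def imM (A : Matrix m m ℂ) : Matrix m m ℂ := (1/(2*Complex.I)) • (A - Aᴴ)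

/-- Numerical range `W(A) = {x* A x : x*x = 1}`. -/
def numRange [Fintype m] (A : Matrix m m ℂ) : Set ℂ :=
  {z | ∃ x : m → ℂ, star x ⬝ᵥ x = 1 ∧ z = star x ⬝ᵥ A.mulVec x}

/-- The sector `S_α = {z : Re z ≥ 0, |Im z| ≤ (Re z) tan α}`. -/
def sector (α : ℝ) : Set ℂ := {z | 0 ≤ z.re ∧ |z.im| ≤ z.re * Real.tan α}

/-- The `j`-th largest eigenvalue of a Hermitian matrix (junk value `0` otherwise). -/
noncomputable def eigDesc {n : ℕ} (X : Matrix (Fin n) (Fin n) ℂ) : Fin n → ℝ :=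
  if h : X.IsHermitian then fun j => h.eigenvalues (Tuple.sort h.eigenvalues j.rev)
  else 0

open Module Submodule

lemma LinearIndependent.finrank_span_image {K V ι : Type*} [DivisionRing K] [AddCommGroup V]
    [Module K V] {v : ι → V} (hv : LinearIndependent K v) (s : Finset ι) :
    finrank K (span K (v '' s)) = s.card := by
  rw [Set.image_eq_range]
  exact (finrank_span_eq_card (hv.comp _ Subtype.val_injective)).trans (by simp)

lemma exists_ne_zero_mem_span_Iic_mem_span_Ici {K V : Type*} [DivisionRing K] [AddCommGroup V]
    [Module K V] {n : ℕ} (b c : Basis (Fin n) K V) (j : Fin n) :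
    ∃ x ≠ 0, x ∈ span K (b '' Iic j) ∧ x ∈ span K (c '' Ici j) := by
  have : FiniteDimensional K V := b.finiteDimensional_of_finite
  have hdim : finrank K V < finrank K (span K (b '' Iic j)) + finrank K (span K (c '' Ici j)) := by
    rw [← Finset.coe_Iic, ← Finset.coe_Ici, b.linearIndependent.finrank_span_image,
      c.linearIndependent.finrank_span_image, finrank_eq_card_basis b, Fin.card_Iic,
      Fin.card_Ici, Fintype.card_fin]
    omega
  by_contra! hmeet
  exact (finrank_add_finrank_le_of_disjoint (disjoint_def.mpr fun x hb hc =>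
    by_contra fun hx => hmeet x hx hb hc)).not_gt hdim

section

variable {𝕜 E ι : Type*} [RCLike 𝕜] [NormedAddCommGroup E] [InnerProductSpace 𝕜 E]
  [Fintype ι] {b : OrthonormalBasis ι 𝕜 E}

local notation "⟪" x ", " y "⟫" => inner 𝕜 x y

lemma OrthonormalBasis.inner_eq_zero_of_mem_span {s : Set ι} {i : ι} (hi : i ∉ s) {x : E}
    (hx : x ∈ span 𝕜 (b '' s)) : ⟪b i, x⟫ = 0 := by
  have hle : span 𝕜 (b '' s) ≤ LinearMap.ker (innerₛₗ 𝕜 (b i)) := by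
    refine span_le.mpr ?_
    rintro _ ⟨k, hk, rfl⟩
    exact b.orthonormal.inner_eq_zero (ne_of_mem_of_not_mem hk hi).symm
  exact hle hx

namespace LinearMap.IsSymmetric

variable {T : E →ₗ[𝕜] E} {μ : ι → ℝ}

lemma inner_basis_apply (hT : T.IsSymmetric) (hb : ∀ i, T (b i) = (μ i : 𝕜) • b i)
    (i : ι) (x : E) : ⟪b i, T x⟫ = μ i * ⟪b i, x⟫ := by
  rw [← hT, hb, inner_smul_left, RCLike.conj_ofReal]

lemma re_inner_apply_self_eq_sum (hT : T.IsSymmetric) (hb : ∀ i, T (b i) = (μ i : 𝕜) • b i)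
    (x : E) : RCLike.re ⟪x, T x⟫ = ∑ i, μ i * ‖⟪b i, x⟫‖ ^ 2 := by
  rw [← b.sum_inner_mul_inner, map_sum]
  refine Finset.sum_congr rfl fun i _ => ?_
  rw [hT.inner_basis_apply hb, ← inner_conj_symm, mul_left_comm, RCLike.conj_mul]
  norm_cast

lemma norm_apply_sq_eq_sum (hT : T.IsSymmetric) (hb : ∀ i, T (b i) = (μ i : 𝕜) • b i)
    (x : E) : ‖T x‖ ^ 2 = ∑ i, μ i ^ 2 * ‖⟪b i, x⟫‖ ^ 2 := by
  simp only [← b.sum_sq_norm_inner_right (T x), hT.inner_basis_apply hb, norm_mul, mul_pow,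
    RCLike.norm_ofReal, sq_abs]

variable [Preorder ι]

lemma mul_norm_sq_le_re_inner_apply_self (hT : T.IsSymmetric)
    (hb : ∀ i, T (b i) = (μ i : 𝕜) • b i) (hμ : Antitone μ) {j : ι} {x : E}
    (hx : x ∈ span 𝕜 (b '' Iic j)) : μ j * ‖x‖ ^ 2 ≤ RCLike.re ⟪x, T x⟫ := by
  rw [hT.re_inner_apply_self_eq_sum hb, ← b.sum_sq_norm_inner_right, Finset.mul_sum]
  refine Finset.sum_le_sum fun i _ => ?_
  by_cases hi : i ≤ j
  · exact mul_le_mul_of_nonneg_right (hμ hi) (by positivity)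
  · simp [b.inner_eq_zero_of_mem_span (s := Iic j) hi hx]

lemma norm_apply_le_mul_norm (hT : T.IsSymmetric) (hb : ∀ i, T (b i) = (μ i : 𝕜) • b i)
    (hμ : Antitone μ) (hμ₀ : ∀ i, 0 ≤ μ i) {j : ι} {x : E} (hx : x ∈ span 𝕜 (b '' Ici j)) :
    ‖T x‖ ≤ μ j * ‖x‖ := by
  refine pow_le_pow_iff_left₀ (norm_nonneg _) (by positivity [hμ₀ j]) two_ne_zero |>.mp ?_
  rw [hT.norm_apply_sq_eq_sum hb, mul_pow, ← b.sum_sq_norm_inner_right, Finset.mul_sum]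
  refine Finset.sum_le_sum fun i _ => ?_
  by_cases hi : j ≤ i
  · exact mul_le_mul_of_nonneg_right (pow_le_pow_left₀ (hμ₀ i) (hμ hi) 2) (by positivity)
  · simp [b.inner_eq_zero_of_mem_span (s := Ici j) hi hx]

end LinearMap.IsSymmetric

end

lemma LinearMap.IsSymmetric.eigenvalue_le_of_re_inner_le_norm_mul_norm {𝕜 E : Type*} [RCLike 𝕜]
    [NormedAddCommGroup E] [InnerProductSpace 𝕜 E] {n : ℕ} {T S : E →ₗ[𝕜] E}
    (hT : T.IsSymmetric) (hS : S.IsSymmetric) {b c : OrthonormalBasis (Fin n) 𝕜 E}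
    {μ s : Fin n → ℝ} (hb : ∀ i, T (b i) = (μ i : 𝕜) • b i) (hc : ∀ i, S (c i) = (s i : 𝕜) • c i)
    (hμ : Antitone μ) (hs : Antitone s) (hs₀ : ∀ i, 0 ≤ s i)
    (h : ∀ x, RCLike.re (inner 𝕜 x (T x)) ≤ ‖S x‖ * ‖x‖) (j : Fin n) : μ j ≤ s j := by
  obtain ⟨x, hx₀, hxb, hxc⟩ := exists_ne_zero_mem_span_Iic_mem_span_Ici b.toBasis c.toBasis j
  rw [OrthonormalBasis.coe_toBasis] at hxb hxc
  refine le_of_mul_le_mul_right ?_ (by positivity : 0 < ‖x‖ ^ 2)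
  calc μ j * ‖x‖ ^ 2 ≤ RCLike.re (inner 𝕜 x (T x)) :=
        hT.mul_norm_sq_le_re_inner_apply_self hb hμ hxb
    _ ≤ ‖S x‖ * ‖x‖ := h x
    _ ≤ s j * ‖x‖ * ‖x‖ :=
      mul_le_mul_of_nonneg_right (hS.norm_apply_le_mul_norm hc hs hs₀ hxc) (norm_nonneg x)
    _ = s j * ‖x‖ ^ 2 := by ring

lemma reM_isHermitian (A : Matrix m m ℂ) : (reM A).IsHermitian := by
  rw [reM, IsHermitian, conjTranspose_smul, conjTranspose_add, conjTranspose_conjTranspose,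
    add_comm]
  simp

section

variable [Fintype m] [DecidableEq m]

local notation "⟪" x ", " y "⟫" => inner ℂ x y

lemma re_inner_toEuclideanLin_reM (A : Matrix m m ℂ) (x : EuclideanSpace ℂ m) :
    (⟪x, toEuclideanLin (reM A) x⟫).re = (⟪x, toEuclideanLin A x⟫).re := by
  have hadj : ⟪x, toEuclideanLin Aᴴ x⟫ = starRingEnd ℂ ⟪x, toEuclideanLin A x⟫ := by
    rw [toEuclideanLin_conjTranspose_eq_adjoint, LinearMap.adjoint_inner_right, inner_conj_symm]
  simp only [reM, map_smul, LinearMap.smul_apply, map_add, LinearMap.add_apply, inner_smul_right,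
    inner_add_right, hadj, Complex.add_conj]
  simp

lemma norm_toEuclideanLin_eq_of_conjTranspose_mul_self_eq {A B : Matrix m m ℂ}
    (h : Aᴴ * A = Bᴴ * B) (x : EuclideanSpace ℂ m) :
    ‖toEuclideanLin A x‖ = ‖toEuclideanLin B x‖ := by
  have hsq (M : Matrix m m ℂ) :
      ‖toEuclideanLin M x‖ ^ 2 = (⟪x, toEuclideanLin (Mᴴ * M) x⟫).re := by
    rw [toLpLin_mul_same, LinearMap.comp_apply, toEuclideanLin_conjTranspose_eq_adjoint,
      LinearMap.adjoint_inner_right, ← inner_self_eq_norm_sq (𝕜 := ℂ), RCLike.re_to_complex]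
  rw [← sq_eq_sq₀ (norm_nonneg _) (norm_nonneg _), hsq, hsq, h]

lemma matAbs_mul_self (A : Matrix m m ℂ) : matAbs A * matAbs A = Aᴴ * A := by
  have hA := (posSemidef_conjTranspose_mul_self A).1
  have hsqrt : Matrix.diagonal ((↑) ∘ Real.sqrt ∘ hA.eigenvalues : m → ℂ) *
      Matrix.diagonal ((↑) ∘ Real.sqrt ∘ hA.eigenvalues) =
        Matrix.diagonal (RCLike.ofReal ∘ hA.eigenvalues) := by
    rw [diagonal_mul_diagonal]
    congr 1
    funext i
    simp [← Complex.ofReal_mul,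
      Real.mul_self_sqrt ((posSemidef_conjTranspose_mul_self A).eigenvalues_nonneg i)]
  conv_rhs => rw [hA.spectral_theorem, Unitary.conjStarAlgAut_apply, ← hsqrt]
  simp only [matAbs, Matrix.mul_assoc]
  rw [← Matrix.mul_assoc (star _) _ (Matrix.diagonal _ * _), Unitary.coe_star_mul_self,
    Matrix.one_mul]

lemma re_inner_toEuclideanLin_reM_le (A : Matrix m m ℂ) (x : EuclideanSpace ℂ m) :
    (⟪x, toEuclideanLin (reM A) x⟫).re ≤ ‖toEuclideanLin (matAbs A) x‖ * ‖x‖ := by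
  have hnorm : ‖toEuclideanLin (matAbs A) x‖ = ‖toEuclideanLin A x‖ := by
    refine norm_toEuclideanLin_eq_of_conjTranspose_mul_self_eq ?_ x
    rw [(matAbs_posSemidef A).isHermitian.eq, matAbs_mul_self]
  calc (⟪x, toEuclideanLin (reM A) x⟫).re = (⟪x, toEuclideanLin A x⟫).re :=
        re_inner_toEuclideanLin_reM A x
    _ ≤ ‖⟪x, toEuclideanLin A x⟫‖ := Complex.re_le_norm _
    _ ≤ ‖x‖ * ‖toEuclideanLin A x‖ := norm_inner_le_norm x _
    _ = ‖toEuclideanLin (matAbs A) x‖ * ‖x‖ := by rw [hnorm, mul_comm]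

end

section

variable {n : ℕ} {X : Matrix (Fin n) (Fin n) ℂ}

lemma eigDesc_antitone (hX : X.IsHermitian) : Antitone (eigDesc X) := by
  rw [eigDesc, dif_pos hX]
  exact fun k l hkl => Tuple.monotone_sort hX.eigenvalues (Fin.rev_le_rev.mpr hkl)

lemma eigDesc_nonneg (hX : X.PosSemidef) (k : Fin n) : 0 ≤ eigDesc X k := by
  rw [eigDesc, dif_pos hX.isHermitian]
  exact hX.eigenvalues_nonneg _

lemma exists_orthonormalBasis_toEuclideanLin_eq_eigDesc_smul (hX : X.IsHermitian) :
    ∃ b : OrthonormalBasis (Fin n) ℂ (EuclideanSpace ℂ (Fin n)),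
      ∀ k, toEuclideanLin X (b k) = (eigDesc X k : ℂ) • b k := by
  refine ⟨hX.eigenvectorBasis.reindex (Fin.revPerm.trans (Tuple.sort hX.eigenvalues)).symm,
    fun k => ?_⟩
  rw [eigDesc, dif_pos hX, OrthonormalBasis.reindex_apply, Equiv.symm_symm]
  apply WithLp.ofLp_injective
  rw [toLpLin_apply, WithLp.ofLp_toLp, hX.mulVec_eigenvectorBasis, WithLp.ofLp_smul,
    RCLike.real_smul_eq_coe_smul (K := ℂ)]
  rfl

end

theorem fan_hoffman {n : ℕ} (A : Matrix (Fin n) (Fin n) ℂ) (j : Fin n) :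
    eigDesc (reM A) j ≤ eigDesc (matAbs A) j := by
  have hH := reM_isHermitian A
  have hP := matAbs_posSemidef A
  obtain ⟨b, hb⟩ := exists_orthonormalBasis_toEuclideanLin_eq_eigDesc_smul hH
  obtain ⟨c, hc⟩ := exists_orthonormalBasis_toEuclideanLin_eq_eigDesc_smul hP.isHermitian
  exact (isSymmetric_toEuclideanLin_iff.mpr hH).eigenvalue_le_of_re_inner_le_norm_mul_norm
    (isSymmetric_toEuclideanLin_iff.mpr hP.isHermitian) hb hc (eigDesc_antitone hH)
    (eigDesc_antitone hP.isHermitian) (eigDesc_nonneg hP) (re_inner_toEuclideanLin_reM_le A) j
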